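/- Theorem 3 (certified unlearning bound for convex losses via ℓ₂ regularization, explicit constants): Let D > 0 and let Θ ⊆ E be a convex subset of the closed ball of radius D centered at the origin. Suppose θ ↦ ℓ(θ, z) is L-Lipschitz on Θ for every z ∈ Z, with L > 0. Let 1 ≤ k ≤ n and let D^{(n)}, …, D^{(k)} be a chain of datasets with |D^{(j)}| = j, each D^{(j)} obtained from D^{(j+1)} by removing one element. Suppose each empirical loss f_{D^{(j)}} is differentiable, convex on E, and has M-Lipschitz gradient with M > 0. For m > 0 define g_j(θ) = f_{D^{(j)}}(θ) + (m/2)‖θ‖², and suppose each g_j has a point θ_j*ʳ ∈ Θ with ∇g_j(θ_j*ʳ) = 0 and g_j(θ_j*ʳ) ≤ g_j(θ) for all θ ∈ E. Set γ = M/(M + 2m) and η = 2/(M + 2m). Let θ̂₀ be obtained by T steps of gradient descent on g_n with step size η from an initial point θ₀ with ‖θ₀ − θ_n*ʳ‖ ≤ D, where T ≥ I − log_γ(Dmn/(2L)) for a natural number I; then let θ̂₁ be obtained by I steps of gradient descent on g_k with step size η from θ̂₀. Let θ_k* ∈ Θ minimize f_{D^{(k)}} over Θ, and set B = (2(L + mD)γ^I/m)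 · (1/n + Σ_{j=k+1}^{n} 1/j). Then f_{D^{(k)}}(θ̂₁) − f_{D^{(k)}}(θ_k*) ≤ (M/2)B² + mDB + (m/2)D². -/

import Mathlib

open scoped RealInnerProductSpace
set_option maxHeartbeats 1000000

/-- Empirical loss of a per-sample loss `ℓ` over a dataset (multiset) `D`:
`f_D(θ) = (1/|D|) ∑_{z ∈ D} ℓ(θ, z)`, counting multiplicity. -/
noncomputable def empLoss {E : Type*} [NormedAddCommGroup E] [InnerProductSpace ℝ E]
    {Z : Type*} (ℓ : E → Z → ℝ) (D : Multiset Z) (θ : E) : ℝ :=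
  (D.map (fun z => ℓ θ z)).sum / D.card

/-- Gradient-descent iterates on `f` with step size `η` from initial point `θ₀`:
`θ_{t+1} = θ_t − η ∇f(θ_t)`. -/
noncomputable def gdIter {E : Type*} [NormedAddCommGroup E] [InnerProductSpace ℝ E]
    [CompleteSpace E] (f : E → ℝ) (η : ℝ) (θ₀ : E) : ℕ → E
  | 0 => θ₀
  | t + 1 => gdIter f η θ₀ t - η • gradient f (gdIter f η θ₀ t)

section helpers

variable {E : Type*} [NormedAddCommGroup E] [InnerProductSpace ℝ E] [CompleteSpace E]

lemma fderiv_apply_eq_inner_gradient (f : E → ℝ) (x v : E) (hf : DifferentiableAt ℝ f x) :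
    fderiv ℝ f x v = ⟪gradient f x, v⟫ := by
  have h := hf.hasGradientAt
  rw [hasGradientAt_iff_hasFDerivAt] at h
  rw [h.fderiv, InnerProductSpace.toDual_apply_apply]

lemma hasGradientAt_norm_sq (x : E) :
    HasGradientAt (fun y : E => ‖y‖ ^ 2) ((2 : ℝ) • x) x := by
  rw [hasGradientAt_iff_hasFDerivAt]
  have h := (hasFDerivAt_id x).inner ℝ (hasFDerivAt_id x)
  have h2 : HasFDerivAt (fun y : E => ‖y‖ ^ 2)
      ((fderivInnerCLM ℝ (x, x)).comp ((ContinuousLinearMap.id ℝ E).prod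
        (ContinuousLinearMap.id ℝ E))) x := by
    refine h.congr_of_eventuallyEq ?_
    exact Filter.Eventually.of_forall fun y => (real_inner_self_eq_norm_sq y).symm
  have heq : (InnerProductSpace.toDual ℝ E) ((2 : ℝ) • x)
      = (fderivInnerCLM ℝ (x, x)).comp ((ContinuousLinearMap.id ℝ E).prod
        (ContinuousLinearMap.id ℝ E)) := by
    ext v
    simp [InnerProductSpace.toDual_apply_apply, fderivInnerCLM_apply, real_inner_smul_left,
      real_inner_comm, two_mul]
  rw [heq]; exact h2

lemma hasGradientAt_reg (f : E → ℝ) {x : E} (hf : DifferentiableAt ℝ f x) (m : ℝ) :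
    HasGradientAt (fun θ => f θ + m / 2 * ‖θ‖ ^ 2) (gradient f x + m • x) x := by
  rw [hasGradientAt_iff_hasFDerivAt]
  have h1 : HasFDerivAt f (InnerProductSpace.toDual ℝ E (gradient f x)) x := by
    have := hf.hasGradientAt; rwa [hasGradientAt_iff_hasFDerivAt] at this
  have h2 : HasFDerivAt (fun θ : E => ‖θ‖ ^ 2)
      (InnerProductSpace.toDual ℝ E ((2 : ℝ) • x)) x := by
    have := hasGradientAt_norm_sq x; rwa [hasGradientAt_iff_hasFDerivAt] at this
  have h3 := h1.add (h2.const_mul (m / 2))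
  refine h3.congr_fderiv ?_
  ext v
  simp [InnerProductSpace.toDual_apply_apply, real_inner_smul_left, inner_add_left]
  ring

lemma gradient_reg (f : E → ℝ) (hf : Differentiable ℝ f) (m : ℝ) (x : E) :
    gradient (fun θ => f θ + m / 2 * ‖θ‖ ^ 2) x = gradient f x + m • x :=
  (hasGradientAt_reg f (hf x) m).gradient

lemma convexOn_gradient_le {f : E → ℝ} (hd : Differentiable ℝ f)
    (hc : ConvexOn ℝ Set.univ f) (x y : E) :
    f x + ⟪gradient f x, y - x⟫ ≤ f y := by
  have hcurve : ∀ t : ℝ, HasDerivAt (fun s : ℝ => s • (y - x) + x) (y - x) t := by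
    intro t
    simpa using ((hasDerivAt_id t).smul_const (y - x)).add_const x
  have hder : HasDerivAt (fun t : ℝ => f (t • (y - x) + x))
      ⟪gradient f ((0:ℝ) • (y - x) + x), y - x⟫ 0 := by
    have h1 := (hd _).hasFDerivAt.comp_hasDerivAt 0 (hcurve 0)
    rwa [fderiv_apply_eq_inner_gradient f _ (y - x) (hd _)] at h1
  have hφc : ConvexOn ℝ Set.univ (fun t : ℝ => f (t • (y - x) + x)) := by
    have h := hc.comp_affineMap (AffineMap.lineMap x y)
    have heq : (f ∘ (AffineMap.lineMap x y)) = fun t : ℝ => f (t • (y - x) + x) := by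
      funext t; simp [AffineMap.lineMap_apply, vsub_eq_sub, vadd_eq_add]
    rw [heq] at h
    simpa using h
  have hslope := hφc.le_slope_of_hasDerivAt (Set.mem_univ (0:ℝ)) (Set.mem_univ (1:ℝ))
    one_pos hder
  rw [slope_def_field] at hslope
  simp only [zero_smul, zero_add, one_smul, sub_add_cancel, sub_zero, div_one] at hslope
  linarith

lemma descent_lemma {f : E → ℝ} (hd : Differentiable ℝ f) {C : ℝ} (hC : 0 ≤ C)
    (hl : ∀ a b : E, ‖gradient f a - gradient f b‖ ≤ C * ‖a - b‖) (x y : E) :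
    f y ≤ f x + ⟪gradient f x, y - x⟫ + C / 2 * ‖y - x‖ ^ 2 := by
  set d := y - x with hdd
  set ψ : ℝ → ℝ := fun t => f (t • d + x) - t * ⟪gradient f x, d⟫ - C / 2 * t ^ 2 * ‖d‖ ^ 2
    with hψ
  have hcurve : ∀ t : ℝ, HasDerivAt (fun s : ℝ => s • d + x) d t := fun t => by
    simpa using ((hasDerivAt_id t).smul_const d).add_const x
  have hder : ∀ t : ℝ, HasDerivAt ψ
      (⟪gradient f (t • d + x), d⟫ - ⟪gradient f x, d⟫ - C / 2 * (2 * t) * ‖d‖ ^ 2) t := by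
    intro t
    have h1 := (hd _).hasFDerivAt.comp_hasDerivAt t (hcurve t)
    rw [fderiv_apply_eq_inner_gradient f _ d (hd _)] at h1
    have h2 : HasDerivAt (fun t : ℝ => t * ⟪gradient f x, d⟫) ⟪gradient f x, d⟫ t := by
      simpa using (hasDerivAt_id t).mul_const ⟪gradient f x, d⟫
    have h3 : HasDerivAt (fun t : ℝ => C / 2 * t ^ 2 * ‖d‖ ^ 2)
        (C / 2 * (2 * t) * ‖d‖ ^ 2) t := by
      have h4 := ((hasDerivAt_pow 2 t).const_mul (C / 2)).mul_const (‖d‖ ^ 2)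
      rw [show C / 2 * (2 * t) * ‖d‖ ^ 2 = C / 2 * ((2:ℕ) * t ^ (2 - 1)) * ‖d‖ ^ 2 by norm_num]
      exact h4
    exact (h1.sub h2).sub h3
  have hmono : AntitoneOn ψ (Set.Icc (0:ℝ) 1) := by
    apply antitoneOn_of_deriv_nonpos (convex_Icc 0 1)
    · exact fun t _ => ((hder t).continuousAt.continuousWithinAt)
    · intro t _
      exact ((hder t).differentiableAt).differentiableWithinAt
    · intro t ht
      rw [interior_Icc] at ht
      rw [(hder t).deriv]
      have hb : ⟪gradient f (t • d + x) - gradient f x, d⟫ ≤ C * t * ‖d‖ ^ 2 := by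
        calc ⟪gradient f (t • d + x) - gradient f x, d⟫
            ≤ ‖gradient f (t • d + x) - gradient f x‖ * ‖d‖ := real_inner_le_norm _ _
          _ ≤ (C * ‖t • d + x - x‖) * ‖d‖ :=
              mul_le_mul_of_nonneg_right (hl _ _) (norm_nonneg d)
          _ = C * t * ‖d‖ ^ 2 := by
              rw [add_sub_cancel_right, norm_smul, Real.norm_eq_abs, abs_of_pos ht.1]
              ring
      rw [inner_sub_left] at hb
      nlinarith [hb]
  have h01 := hmono (Set.left_mem_Icc.mpr zero_le_one) (Set.right_mem_Icc.mpr zero_le_one)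
    zero_le_one
  have hψ0 : ψ 0 = f x := by simp [hψ]
  have hψ1 : ψ 1 = f y - ⟪gradient f x, d⟫ - C / 2 * ‖d‖ ^ 2 := by
    simp [hψ, hdd]
  rw [hψ0, hψ1] at h01
  linarith

lemma claim_cococo {f : E → ℝ} (hd : Differentiable ℝ f) (hc : ConvexOn ℝ Set.univ f)
    {C : ℝ} (hC : 0 < C) (hl : ∀ a b : E, ‖gradient f a - gradient f b‖ ≤ C * ‖a - b‖)
    (x y : E) :
    f x + ⟪gradient f x, y - x⟫ + 1 / (2 * C) * ‖gradient f y - gradient f x‖ ^ 2 ≤ f y := by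
  set Δ := gradient f y - gradient f x with hΔ
  set w := y - (1 / C) • Δ with hw
  have h1 := convexOn_gradient_le hd hc x w
  have h2 := descent_lemma hd hC.le hl y w
  have e1 : ⟪gradient f x, w - x⟫ = ⟪gradient f x, y - x⟫ - (1 / C) * ⟪gradient f x, Δ⟫ := by
    have : w - x = (y - x) - (1 / C) • Δ := by rw [hw]; abel
    rw [this, inner_sub_right, real_inner_smul_right]
  have e2 : ⟪gradient f y, w - y⟫ = -((1 / C) * ⟪gradient f y, Δ⟫) := by
    have : w - y = -((1 / C) • Δ) := by rw [hw]; abel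
    rw [this, inner_neg_right, real_inner_smul_right]
  have e3 : ‖w - y‖ ^ 2 = (1 / C) ^ 2 * ‖Δ‖ ^ 2 := by
    have : w - y = -((1 / C) • Δ) := by rw [hw]; abel
    rw [this, norm_neg, norm_smul, Real.norm_eq_abs, abs_of_pos (by positivity : (0:ℝ) < 1 / C)]
    ring
  have e4 : ⟪gradient f y, Δ⟫ - ⟪gradient f x, Δ⟫ = ‖Δ‖ ^ 2 := by
    rw [← inner_sub_left, ← hΔ, real_inner_self_eq_norm_sq]
  have hC' : C ≠ 0 := ne_of_gt hC
  have harith : C / 2 * ((1 / C) ^ 2 * ‖Δ‖ ^ 2) = 1 / (2 * C) * ‖Δ‖ ^ 2 := by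
    field_simp
  have e5 : (1 / C) * ⟪gradient f y, Δ⟫ - (1 / C) * ⟪gradient f x, Δ⟫
      = (1 / C) * ‖Δ‖ ^ 2 := by rw [← mul_sub, e4]
  have e6 : (1 / C) * ‖Δ‖ ^ 2 = 1 / (2 * C) * ‖Δ‖ ^ 2 + 1 / (2 * C) * ‖Δ‖ ^ 2 := by
    field_simp; ring
  rw [e1] at h1
  rw [e2, e3] at h2
  rw [harith] at h2
  linarith [h1, h2, e5, e6]

lemma inner_grad_ge {f : E → ℝ} (hd : Differentiable ℝ f) (hc : ConvexOn ℝ Set.univ f)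
    {C : ℝ} (hC : 0 < C) (hl : ∀ a b : E, ‖gradient f a - gradient f b‖ ≤ C * ‖a - b‖)
    (x y : E) :
    1 / C * ‖gradient f x - gradient f y‖ ^ 2 ≤ ⟪gradient f x - gradient f y, x - y⟫ := by
  have h1 := claim_cococo hd hc hC hl x y
  have h2 := claim_cococo hd hc hC hl y x
  have hn : ‖gradient f y - gradient f x‖ = ‖gradient f x - gradient f y‖ := norm_sub_rev _ _
  rw [hn] at h1
  have e1 : ⟪gradient f x, y - x⟫ = ⟪gradient f x, y⟫ - ⟪gradient f x, x⟫ := inner_sub_right _ _ _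
  have e2 : ⟪gradient f y, x - y⟫ = ⟪gradient f y, x⟫ - ⟪gradient f y, y⟫ := inner_sub_right _ _ _
  have e3 : ⟪gradient f x - gradient f y, x - y⟫
      = ⟪gradient f x, x⟫ - ⟪gradient f x, y⟫ - ⟪gradient f y, x⟫ + ⟪gradient f y, y⟫ := by
    rw [inner_sub_left, inner_sub_right, inner_sub_right]; ring
  have e6 : (1 / C) * ‖gradient f x - gradient f y‖ ^ 2
      = 1 / (2 * C) * ‖gradient f x - gradient f y‖ ^ 2
        + 1 / (2 * C) * ‖gradient f x - gradient f y‖ ^ 2 := by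
    field_simp; ring
  rw [e1] at h1; rw [e2] at h2; rw [e3]
  linarith [h1, h2, e6]

lemma contraction_step {f : E → ℝ} (hd : Differentiable ℝ f) (hc : ConvexOn ℝ Set.univ f)
    {M m : ℝ} (hM : 0 < M) (hm : 0 < m)
    (hl : ∀ a b : E, ‖gradient f a - gradient f b‖ ≤ M * ‖a - b‖)
    {p : E} (hp : gradient (fun θ => f θ + m / 2 * ‖θ‖ ^ 2) p = 0) (x : E) :
    ‖x - (2 / (M + 2 * m)) • gradient (fun θ => f θ + m / 2 * ‖θ‖ ^ 2) x - p‖ ≤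
      M / (M + 2 * m) * ‖x - p‖ := by
  have hMm : 0 < M + 2 * m := by linarith
  set η : ℝ := 2 / (M + 2 * m) with hηd
  set γ : ℝ := M / (M + 2 * m) with hγd
  have hγpos : 0 < γ := by positivity
  have hηpos : 0 < η := by positivity
  have hgx : gradient (fun θ => f θ + m / 2 * ‖θ‖ ^ 2) x = gradient f x + m • x :=
    gradient_reg f hd m x
  have hgp : gradient f p = -(m • p) := by
    have h := gradient_reg f hd m p
    rw [hp] at h
    exact eq_neg_of_add_eq_zero_left h.symm
  set u := gradient f x - gradient f p with hu
  set d := x - p with hdd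
  have hγη : γ = 1 - η * m := by
    rw [hγd, hηd]; field_simp; ring
  have hv : x - η • (gradient f x + m • x) - p = γ • d - η • u := by
    rw [hγη, hu, hdd, hgp]
    module
  rw [hgx, hv]
  have hco := inner_grad_ge hd hc hM hl x p
  have hexp : ‖γ • d - η • u‖ ^ 2
      = γ ^ 2 * ‖d‖ ^ 2 - 2 * (γ * η) * ⟪u, d⟫ + η ^ 2 * ‖u‖ ^ 2 := by
    rw [norm_sub_sq_real, norm_smul, norm_smul, real_inner_smul_left, real_inner_smul_right,
      Real.norm_eq_abs, Real.norm_eq_abs, abs_of_pos hγpos, abs_of_pos hηpos,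
      mul_pow, mul_pow, real_inner_comm d u]
    ring
  have hkey : η ^ 2 = 2 * (γ * η) * (1 / M) := by
    rw [hγd, hηd]; field_simp
  have hsq : ‖γ • d - η • u‖ ^ 2 ≤ (γ * ‖d‖) ^ 2 := by
    rw [hexp]
    have h1 : 2 * (γ * η) * (1 / M * ‖u‖ ^ 2) ≤ 2 * (γ * η) * ⟪u, d⟫ :=
      mul_le_mul_of_nonneg_left hco (by positivity)
    nlinarith [h1, hkey]
  have h2 := Real.sqrt_le_sqrt hsq
  rwa [Real.sqrt_sq (norm_nonneg _), Real.sqrt_sq (by positivity)] at h2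

lemma gd_contract {f : E → ℝ} (hd : Differentiable ℝ f) (hc : ConvexOn ℝ Set.univ f)
    {M m : ℝ} (hM : 0 < M) (hm : 0 < m)
    (hl : ∀ a b : E, ‖gradient f a - gradient f b‖ ≤ M * ‖a - b‖)
    {g : E → ℝ} (hg : g = fun θ => f θ + m / 2 * ‖θ‖ ^ 2)
    {p : E} (hp : gradient g p = 0) (θ₀ : E) (t : ℕ) :
    ‖gdIter g (2 / (M + 2 * m)) θ₀ t - p‖ ≤ (M / (M + 2 * m)) ^ t * ‖θ₀ - p‖ := by
  subst hg
  induction t with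
  | zero => simp [gdIter]
  | succ t ih =>
      have hstep := contraction_step hd hc hM hm hl hp
        (gdIter (fun θ => f θ + m / 2 * ‖θ‖ ^ 2) (2 / (M + 2 * m)) θ₀ t)
      have hγpos : (0:ℝ) ≤ M / (M + 2 * m) := by positivity
      calc ‖gdIter (fun θ => f θ + m / 2 * ‖θ‖ ^ 2) (2 / (M + 2 * m)) θ₀ (t + 1) - p‖
          ≤ M / (M + 2 * m) *
            ‖gdIter (fun θ => f θ + m / 2 * ‖θ‖ ^ 2) (2 / (M + 2 * m)) θ₀ t - p‖ := hstep
        _ ≤ M / (M + 2 * m) * ((M / (M + 2 * m)) ^ t * ‖θ₀ - p‖) :=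
            mul_le_mul_of_nonneg_left ih hγpos
        _ = (M / (M + 2 * m)) ^ (t + 1) * ‖θ₀ - p‖ := by ring

lemma strong_min {f : E → ℝ} (hd : Differentiable ℝ f) (hc : ConvexOn ℝ Set.univ f)
    {m : ℝ} {b : E}
    (hb : gradient (fun θ => f θ + m / 2 * ‖θ‖ ^ 2) b = 0) (θ : E) :
    f b + m / 2 * ‖b‖ ^ 2 + m / 2 * ‖θ - b‖ ^ 2 ≤ f θ + m / 2 * ‖θ‖ ^ 2 := by
  have hgb : gradient f b = -(m • b) := by
    have h := gradient_reg f hd m b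
    rw [hb] at h
    exact eq_neg_of_add_eq_zero_left h.symm
  have h1 := convexOn_gradient_le hd hc b θ
  rw [hgb] at h1
  have hexp : ⟪-(m • b), θ - b⟫ = -(m * ⟪b, θ⟫) + m * ‖b‖ ^ 2 := by
    rw [inner_neg_left, real_inner_smul_left, inner_sub_right, real_inner_self_eq_norm_sq]
    ring
  have hnorm : ‖θ - b‖ ^ 2 = ‖θ‖ ^ 2 - 2 * ⟪θ, b⟫ + ‖b‖ ^ 2 := norm_sub_sq_real θ b
  have hcomm : ⟪b, θ⟫ = ⟪θ, b⟫ := real_inner_comm _ _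
  rw [hexp, hcomm] at h1
  rw [hnorm]
  nlinarith [h1]

lemma empLoss_lipschitz {Z : Type*} (ℓ : E → Z → ℝ) (S : Multiset Z) {Θ : Set E} {L : ℝ}
    (hL : 0 ≤ L) (hLip : ∀ z : Z, ∀ x ∈ Θ, ∀ y ∈ Θ, |ℓ x z - ℓ y z| ≤ L * ‖x - y‖)
    {a b : E} (ha : a ∈ Θ) (hb : b ∈ Θ) :
    |empLoss ℓ S a - empLoss ℓ S b| ≤ L * ‖a - b‖ := by
  have key : ∀ S : Multiset Z,
      |(S.map (fun z => ℓ a z)).sum - (S.map (fun z => ℓ b z)).sum|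
        ≤ S.card * (L * ‖a - b‖) := by
    intro S
    induction S using Multiset.induction_on with
    | empty => simp
    | cons z S ih =>
        simp only [Multiset.map_cons, Multiset.sum_cons, Multiset.card_cons]
        have h1 : ℓ a z + (S.map (fun z => ℓ a z)).sum - (ℓ b z + (S.map (fun z => ℓ b z)).sum)
            = (ℓ a z - ℓ b z) + ((S.map (fun z => ℓ a z)).sum - (S.map (fun z => ℓ b z)).sum) := by
          ring
        rw [h1]
        calc |(ℓ a z - ℓ b z) + ((S.map (fun z => ℓ a z)).sum - (S.map (fun z => ℓ b z)).sum)|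
            ≤ |ℓ a z - ℓ b z| + |(S.map (fun z => ℓ a z)).sum - (S.map (fun z => ℓ b z)).sum| :=
              abs_add_le _ _
          _ ≤ L * ‖a - b‖ + S.card * (L * ‖a - b‖) := add_le_add (hLip z a ha b hb) ih
          _ = (S.card + 1 : ℕ) * (L * ‖a - b‖) := by push_cast; ring
  unfold empLoss
  rcases Nat.eq_zero_or_pos S.card with h0 | hpos
  · simp [h0]
    positivity
  · have hcpos : (0:ℝ) < S.card := by exact_mod_cast hpos
    rw [div_sub_div_same, abs_div, abs_of_pos hcpos, div_le_iff₀ hcpos]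
    calc |(S.map (fun z => ℓ a z)).sum - (S.map (fun z => ℓ b z)).sum|
        ≤ S.card * (L * ‖a - b‖) := key S
      _ = L * ‖a - b‖ * S.card := by ring

lemma empLoss_cons_diff {Z : Type*} (ℓ : E → Z → ℝ) (S : Multiset Z) (z : Z) {j : ℕ}
    (hj : S.card = j) (hj0 : 0 < j) (θ : E) :
    empLoss ℓ S θ - empLoss ℓ (z ::ₘ S) θ = (empLoss ℓ S θ - ℓ θ z) / (j + 1) := by
  unfold empLoss
  rw [Multiset.map_cons, Multiset.sum_cons, Multiset.card_cons, hj]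
  have hjR : (0:ℝ) < j := by exact_mod_cast hj0
  have h1 : ((j:ℝ) + 1) ≠ 0 := by positivity
  push_cast
  field_simp
  ring

end helpers

/-- Theorem 3: certified unlearning bound for convex losses via ℓ₂
regularization, with explicit constants. -/
theorem certified_unlearning_convex_regularized
    {E : Type*} [NormedAddCommGroup E] [InnerProductSpace ℝ E] [CompleteSpace E]
    {Z : Type*} (ℓ : E → Z → ℝ)
    (D : ℝ) (hD : 0 < D) (Θ : Set E) (hΘ : Convex ℝ Θ)
    (hball : Θ ⊆ Metric.closedBall (0 : E) D)
    (L : ℝ) (hL : 0 < L)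
    (hLip : ∀ z : Z, ∀ x ∈ Θ, ∀ y ∈ Θ, |ℓ x z - ℓ y z| ≤ L * ‖x - y‖)
    (k n : ℕ) (hk : 1 ≤ k) (hkn : k ≤ n)
    (Dchain : ℕ → Multiset Z)
    (hcard : ∀ j, k ≤ j → j ≤ n → (Dchain j).card = j)
    (hchain : ∀ j, k ≤ j → j < n → ∃ z : Z, Dchain (j + 1) = z ::ₘ Dchain j)
    (M : ℝ) (hM : 0 < M)
    (hdiff : ∀ j, k ≤ j → j ≤ n → Differentiable ℝ (empLoss ℓ (Dchain j)))
    (hconv : ∀ j, k ≤ j → j ≤ n → ConvexOn ℝ Set.univ (empLoss ℓ (Dchain j)))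
    (hgrad : ∀ j, k ≤ j → j ≤ n → ∀ x y : E,
      ‖gradient (empLoss ℓ (Dchain j)) x - gradient (empLoss ℓ (Dchain j)) y‖ ≤ M * ‖x - y‖)
    (m : ℝ) (hm : 0 < m)
    (g : ℕ → E → ℝ)
    (hg : ∀ j, g j = fun θ => empLoss ℓ (Dchain j) θ + (m / 2) * ‖θ‖ ^ 2)
    (θstarR : ℕ → E)
    (hmem : ∀ j, k ≤ j → j ≤ n → θstarR j ∈ Θ)
    (hcrit : ∀ j, k ≤ j → j ≤ n → gradient (g j) (θstarR j) = 0)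
    (hgmin : ∀ j, k ≤ j → j ≤ n → ∀ θ : E, g j (θstarR j) ≤ g j θ)
    (γ η : ℝ) (hγ : γ = M / (M + 2 * m)) (hη : η = 2 / (M + 2 * m))
    (θ₀ : E) (hinit : ‖θ₀ - θstarR n‖ ≤ D)
    (I T : ℕ)
    (hT : (I : ℝ) - Real.log (D * m * n / (2 * L)) / Real.log γ ≤ T)
    (θhat₀ θhat₁ : E)
    (hθhat₀ : θhat₀ = gdIter (g n) η θ₀ T)
    (hθhat₁ : θhat₁ = gdIter (g k) η θhat₀ I)
    (θkstar : E) (hθkmem : θkstar ∈ Θ)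
    (hθkmin : IsMinOn (empLoss ℓ (Dchain k)) Θ θkstar)
    (B : ℝ)
    (hB : B = (2 * (L + m * D) * γ ^ I / m) *
      (1 / n + ∑ j ∈ Finset.Icc (k + 1) n, (1 : ℝ) / j)) :
    empLoss ℓ (Dchain k) θhat₁ - empLoss ℓ (Dchain k) θkstar ≤
      (M / 2) * B ^ 2 + m * D * B + (m / 2) * D ^ 2 := by
  have hMm : 0 < M + 2 * m := by linarith
  have hγ0 : 0 < γ := by rw [hγ]; positivity
  have hγ1 : γ < 1 := by rw [hγ, div_lt_one hMm]; linarith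
  have hn1 : 1 ≤ n := le_trans hk hkn
  have hnR : (0:ℝ) < n := by exact_mod_cast hn1
  have hcrit' : ∀ j, k ≤ j → j ≤ n →
      gradient (fun θ => empLoss ℓ (Dchain j) θ + m / 2 * ‖θ‖ ^ 2) (θstarR j) = 0 := by
    intro j h1 h2
    have h := hcrit j h1 h2
    rwa [hg j] at h
  -- contraction of the two GD phases
  have hcontrN : ∀ θ : E, ∀ t : ℕ, ‖gdIter (g n) η θ t - θstarR n‖ ≤ γ ^ t * ‖θ - θstarR n‖ := by
    intro θ t
    have h := gd_contract (hdiff n hkn le_rfl) (hconv n hkn le_rfl) hM hm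
      (hgrad n hkn le_rfl) (hg n) (hcrit n hkn le_rfl) θ t
    rwa [← hη, ← hγ] at h
  have hcontrK : ∀ θ : E, ∀ t : ℕ, ‖gdIter (g k) η θ t - θstarR k‖ ≤ γ ^ t * ‖θ - θstarR k‖ := by
    intro θ t
    have h := gd_contract (hdiff k le_rfl hkn) (hconv k le_rfl hkn) hM hm
      (hgrad k le_rfl hkn) (hg k) (hcrit k le_rfl hkn) θ t
    rwa [← hη, ← hγ] at h
  have hcontrn : ‖θhat₀ - θstarR n‖ ≤ γ ^ T * D := by
    rw [hθhat₀]
    calc ‖gdIter (g n) η θ₀ T - θstarR n‖ ≤ γ ^ T * ‖θ₀ - θstarR n‖ := hcontrN θ₀ T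
      _ ≤ γ ^ T * D := mul_le_mul_of_nonneg_left hinit (pow_nonneg hγ0.le T)
  -- sensitivity of regularized minimizers along the chain
  have hsens : ∀ j, k ≤ j → j < n →
      ‖θstarR (j+1) - θstarR j‖ ≤ 2 * L / (m * ((j:ℝ) + 1)) := by
    intro j hkj hjn
    obtain ⟨z, hz⟩ := hchain j hkj hjn
    have hjn' : j ≤ n := le_of_lt hjn
    have hkj1 : k ≤ j + 1 := Nat.le_succ_of_le hkj
    have hj1n : j + 1 ≤ n := hjn
    have hj0 : 0 < j := lt_of_lt_of_le Nat.zero_lt_one (le_trans hk hkj)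
    have hjR : (0:ℝ) < j := by exact_mod_cast hj0
    have ha : θstarR (j+1) ∈ Θ := hmem _ hkj1 hj1n
    have hb : θstarR j ∈ Θ := hmem _ hkj hjn'
    have sm1 := strong_min (hdiff j hkj hjn') (hconv j hkj hjn') (hcrit' j hkj hjn')
      (θstarR (j+1))
    have sm2 := strong_min (hdiff (j+1) hkj1 hj1n) (hconv (j+1) hkj1 hj1n)
      (hcrit' (j+1) hkj1 hj1n) (θstarR j)
    have hform : ∀ θ : E, empLoss ℓ (Dchain j) θ - empLoss ℓ (Dchain (j+1)) θ
        = (empLoss ℓ (Dchain j) θ - ℓ θ z) / ((j:ℝ) + 1) := by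
      intro θ
      rw [hz]
      exact empLoss_cons_diff ℓ (Dchain j) z (hcard j hkj hjn') hj0 θ
    have e1 := hform (θstarR (j+1))
    have e2 := hform (θstarR j)
    have hrev : ‖θstarR j - θstarR (j+1)‖ = ‖θstarR (j+1) - θstarR j‖ := norm_sub_rev _ _
    rw [hrev] at sm2
    have hj1R : (0:ℝ) < (j:ℝ) + 1 := by positivity
    have hA := empLoss_lipschitz ℓ (Dchain j) hL.le hLip ha hb
    have hB2 := hLip z _ ha _ hb
    have hsum : m * ‖θstarR (j+1) - θstarR j‖ ^ 2
        ≤ 2 * L * ‖θstarR (j+1) - θstarR j‖ / ((j:ℝ) + 1) := by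
      have hnum : (empLoss ℓ (Dchain j) (θstarR (j+1)) - ℓ (θstarR (j+1)) z)
          - (empLoss ℓ (Dchain j) (θstarR j) - ℓ (θstarR j) z)
          ≤ 2 * L * ‖θstarR (j+1) - θstarR j‖ := by
        have g1 := le_abs_self
          (empLoss ℓ (Dchain j) (θstarR (j+1)) - empLoss ℓ (Dchain j) (θstarR j))
        have g2 := neg_abs_le (ℓ (θstarR (j+1)) z - ℓ (θstarR j) z)
        linarith [hA, hB2, g1, g2]
      have hdivle : (empLoss ℓ (Dchain j) (θstarR (j+1)) - ℓ (θstarR (j+1)) z) / ((j:ℝ) + 1)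
          - (empLoss ℓ (Dchain j) (θstarR j) - ℓ (θstarR j) z) / ((j:ℝ) + 1)
          ≤ 2 * L * ‖θstarR (j+1) - θstarR j‖ / ((j:ℝ) + 1) := by
        rw [div_sub_div_same]
        exact (div_le_div_iff_of_pos_right hj1R).mpr hnum
      linarith [sm1, sm2, e1, e2, hdivle]
    rcases eq_or_lt_of_le (norm_nonneg (θstarR (j+1) - θstarR j)) with h | h
    · rw [← h]; positivity
    · rw [le_div_iff₀ (by positivity : (0:ℝ) < m * ((j:ℝ) + 1))]
      have h2 : m * ‖θstarR (j+1) - θstarR j‖ ^ 2 * ((j:ℝ) + 1)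
          ≤ 2 * L * ‖θstarR (j+1) - θstarR j‖ := (le_div_iff₀ hj1R).mp hsum
      nlinarith [h2, h]
  -- telescoping
  have htel : ∀ jj, k ≤ jj → jj ≤ n →
      ‖θstarR jj - θstarR k‖ ≤ ∑ i ∈ Finset.Icc (k+1) jj, 2 * L / (m * (i:ℝ)) := by
    intro jj hkj
    induction jj, hkj using Nat.le_induction with
    | base => intro _; simp
    | succ j hkj ih =>
        intro hj1n
        have hjn : j < n := hj1n
        have ihe := ih (le_of_lt hjn)
        have hs := hsens j hkj hjn
        have htop : ∑ i ∈ Finset.Icc (k+1) (j+1), 2 * L / (m * (i:ℝ))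
            = (∑ i ∈ Finset.Icc (k+1) j, 2 * L / (m * (i:ℝ))) + 2 * L / (m * ((j:ℝ) + 1)) := by
          rw [Finset.sum_Icc_succ_top (Nat.succ_le_succ hkj)]
          push_cast
          ring
        calc ‖θstarR (j+1) - θstarR k‖
            ≤ ‖θstarR (j+1) - θstarR j‖ + ‖θstarR j - θstarR k‖ :=
              norm_sub_le_norm_sub_add_norm_sub _ _ _
          _ ≤ 2 * L / (m * ((j:ℝ) + 1)) + ∑ i ∈ Finset.Icc (k+1) j, 2 * L / (m * (i:ℝ)) :=
              add_le_add hs ihe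
          _ = ∑ i ∈ Finset.Icc (k+1) (j+1), 2 * L / (m * (i:ℝ)) := by rw [htop]; ring
  -- the log/T bound
  have hlogγ : Real.log γ < 0 := Real.log_neg hγ0 hγ1
  have hlogne : Real.log γ ≠ 0 := ne_of_lt hlogγ
  have hcpos : (0:ℝ) < D * m * n / (2 * L) :=
    div_pos (mul_pos (mul_pos hD hm) hnR) (by positivity)
  have hTlog : (T:ℝ) * Real.log γ ≤ (I:ℝ) * Real.log γ - Real.log (D * m * n / (2 * L)) := by
    have h1 := mul_le_mul_of_nonpos_right hT hlogγ.le
    have h2 : ((I:ℝ) - Real.log (D * m * n / (2 * L)) / Real.log γ) * Real.log γ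
        = (I:ℝ) * Real.log γ - Real.log (D * m * n / (2 * L)) := by
      field_simp
    linarith [h1, h2.symm.le, h2.le]
  have hpowT : (γ:ℝ) ^ T ≤ γ ^ I / (D * m * n / (2 * L)) := by
    have e1 : (γ:ℝ) ^ T = Real.exp ((T:ℝ) * Real.log γ) := by
      rw [← Real.rpow_natCast γ T, Real.rpow_def_of_pos hγ0, mul_comm]
    have e2 : (γ:ℝ) ^ I / (D * m * n / (2 * L))
        = Real.exp ((I:ℝ) * Real.log γ - Real.log (D * m * n / (2 * L))) := by
      rw [Real.exp_sub, ← Real.rpow_natCast γ I, Real.rpow_def_of_pos hγ0, Real.exp_log hcpos,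
        mul_comm]
    rw [e1, e2]
    exact Real.exp_le_exp.mpr hTlog
  have hTD : γ ^ T * D ≤ γ ^ I * (2 * L / (m * n)) := by
    have hDne : D ≠ 0 := ne_of_gt hD
    have hmne : m ≠ 0 := ne_of_gt hm
    have hLne : L ≠ 0 := ne_of_gt hL
    have hnne : (n:ℝ) ≠ 0 := ne_of_gt hnR
    calc γ ^ T * D ≤ (γ ^ I / (D * m * n / (2 * L))) * D :=
        mul_le_mul_of_nonneg_right hpowT hD.le
      _ = γ ^ I * (2 * L / (m * n)) := by field_simp
  -- assemble distance bound
  have hθnk := htel n hkn le_rfl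
  have hhat0k : ‖θhat₀ - θstarR k‖
      ≤ γ ^ T * D + ∑ i ∈ Finset.Icc (k+1) n, 2 * L / (m * (i:ℝ)) := by
    calc ‖θhat₀ - θstarR k‖ ≤ ‖θhat₀ - θstarR n‖ + ‖θstarR n - θstarR k‖ :=
        norm_sub_le_norm_sub_add_norm_sub _ _ _
      _ ≤ _ := add_le_add hcontrn hθnk
  have hhat1k : ‖θhat₁ - θstarR k‖
      ≤ γ ^ I * (γ ^ T * D + ∑ i ∈ Finset.Icc (k+1) n, 2 * L / (m * (i:ℝ))) := by
    rw [hθhat₁]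
    exact le_trans (hcontrK θhat₀ I)
      (mul_le_mul_of_nonneg_left hhat0k (pow_nonneg hγ0.le I))
  have hγI1 : γ ^ I ≤ 1 := pow_le_one₀ hγ0.le hγ1.le
  have hTD' : γ ^ T * D ≤ 2 * L / (m * n) := by
    have h3 : γ ^ I * (2 * L / (m * n)) ≤ 1 * (2 * L / (m * n)) :=
      mul_le_mul_of_nonneg_right hγI1 (by positivity)
    linarith [hTD]
  have hrB : ‖θhat₁ - θstarR k‖ ≤ B := by
    have hsum_le : ∀ i ∈ Finset.Icc (k+1) n, 2 * L / (m * (i:ℝ)) ≤ 2 * (L + m * D) / (m * (i:ℝ)) := by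
      intro i hi
      have hi1 : k + 1 ≤ i := (Finset.mem_Icc.mp hi).1
      have hiR : (0:ℝ) < i := by
        have : 1 ≤ i := le_trans (Nat.le_add_left 1 k) hi1
        exact_mod_cast this
      apply (div_le_div_iff_of_pos_right (by positivity)).mpr
      nlinarith [hm, hD]
    have h1 : γ ^ I * (γ ^ T * D + ∑ i ∈ Finset.Icc (k+1) n, 2 * L / (m * (i:ℝ)))
        ≤ γ ^ I * (2 * (L + m * D) / (m * n) + ∑ i ∈ Finset.Icc (k+1) n,
            2 * (L + m * D) / (m * (i:ℝ))) := by
      apply mul_le_mul_of_nonneg_left _ (pow_nonneg hγ0.le I)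
      apply add_le_add
      · calc γ ^ T * D ≤ 2 * L / (m * n) := hTD'
          _ ≤ 2 * (L + m * D) / (m * n) := by
            apply (div_le_div_iff_of_pos_right (by positivity)).mpr
            nlinarith [hm, hD]
      · exact Finset.sum_le_sum hsum_le
    have h2 : γ ^ I * (2 * (L + m * D) / (m * n) + ∑ i ∈ Finset.Icc (k+1) n,
        2 * (L + m * D) / (m * (i:ℝ))) = B := by
      rw [hB, mul_add (2 * (L + m * D) * γ ^ I / m), mul_add (γ ^ I), Finset.mul_sum, Finset.mul_sum]
      congr 1
      · have hmne : m ≠ 0 := ne_of_gt hm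
        have hnne : (n:ℝ) ≠ 0 := ne_of_gt hnR
        field_simp
      · apply Finset.sum_congr rfl
        intro i hi
        have hi1 : k + 1 ≤ i := (Finset.mem_Icc.mp hi).1
        have hiR : (0:ℝ) < i := by
          have : 1 ≤ i := le_trans (Nat.le_add_left 1 k) hi1
          exact_mod_cast this
        have hmne : m ≠ 0 := ne_of_gt hm
        have hine : (i:ℝ) ≠ 0 := ne_of_gt hiR
        field_simp
    linarith [hhat1k, h1, h2.le, h2.ge]
  -- final function-value bound
  have hmemk := hmem k le_rfl hkn
  have hck : ‖θstarR k‖ ≤ D := by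
    have h := hball hmemk
    rwa [mem_closedBall_zero_iff] at h
  have hstar : ‖θkstar‖ ≤ D := by
    have h := hball hθkmem
    rwa [mem_closedBall_zero_iff] at h
  have hdesc := descent_lemma (hdiff k le_rfl hkn) hM.le (hgrad k le_rfl hkn) (θstarR k) θhat₁
  have hgfc : gradient (empLoss ℓ (Dchain k)) (θstarR k) = -(m • θstarR k) := by
    have h := gradient_reg (empLoss ℓ (Dchain k)) (hdiff k le_rfl hkn) m (θstarR k)
    rw [hcrit' k le_rfl hkn] at h
    exact eq_neg_of_add_eq_zero_left h.symm
  have hinner : ⟪gradient (empLoss ℓ (Dchain k)) (θstarR k), θhat₁ - θstarR k⟫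
      ≤ m * D * ‖θhat₁ - θstarR k‖ := by
    rw [hgfc, inner_neg_left, real_inner_smul_left]
    have habs := abs_real_inner_le_norm (θstarR k) (θhat₁ - θstarR k)
    have h1 : -⟪θstarR k, θhat₁ - θstarR k⟫ ≤ ‖θstarR k‖ * ‖θhat₁ - θstarR k‖ := by
      have h2 := neg_abs_le ⟪θstarR k, θhat₁ - θstarR k⟫
      linarith [habs, h2]
    calc -(m * ⟪θstarR k, θhat₁ - θstarR k⟫) = m * (-⟪θstarR k, θhat₁ - θstarR k⟫) := by ring
      _ ≤ m * (‖θstarR k‖ * ‖θhat₁ - θstarR k‖) := mul_le_mul_of_nonneg_left h1 hm.le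
      _ ≤ m * (D * ‖θhat₁ - θstarR k‖) := by
          apply mul_le_mul_of_nonneg_left _ hm.le
          exact mul_le_mul_of_nonneg_right hck (norm_nonneg _)
      _ = m * D * ‖θhat₁ - θstarR k‖ := by ring
  have hfc : empLoss ℓ (Dchain k) (θstarR k) ≤ empLoss ℓ (Dchain k) θkstar + m / 2 * D ^ 2 := by
    have h := hgmin k le_rfl hkn θkstar
    simp only [hg k] at h
    have h2 : ‖θkstar‖ ^ 2 ≤ D ^ 2 := by nlinarith [hstar, norm_nonneg θkstar]
    nlinarith [h, h2, sq_nonneg ‖θstarR k‖]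
  have hr0 := norm_nonneg (θhat₁ - θstarR k)
  have hB0 : 0 ≤ B := le_trans hr0 hrB
  have hp1 : M / 2 * ‖θhat₁ - θstarR k‖ ^ 2 ≤ M / 2 * B ^ 2 :=
    mul_le_mul_of_nonneg_left (pow_le_pow_left₀ hr0 hrB 2) (by positivity)
  have hp2 : m * D * ‖θhat₁ - θstarR k‖ ≤ m * D * B :=
    mul_le_mul_of_nonneg_left hrB (by positivity)
  linarith [hdesc, hinner, hfc, hp1, hp2]
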